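/- Let p be an odd prime, G = (ℤ/pℤ)*, ζ ∈ ℂ a primitive p-th root of unity, and let a : G → ℤ and b : G → ℤ be functions satisfying the identity 1 − Σ_{h∈G} a(h)·ζ^{−j(h)} = Σ_{u∈G} b(u)/(1 − ζ^{j(u)}) in ℂ. Then for every v ∈ G one has a(v) = ((p−1)/p)·(b*j)(−v) − 1, where the convolution is taken with values in ℚ. -/
import Mathlib


open Finset
section AuxLefschetz
open Polynomial

-- key sum identity
lemma key_sum (p : ℕ) (hp : 0 < p) (x : ℂ) (hx : x ^ p = 1) (hx1 : x ≠ 1) :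
    (∑ m ∈ Finset.range p, (m : ℂ) * x ^ m) * (x - 1) = p := by
  have hgeom : ∑ m ∈ Finset.range p, x ^ m = 0 := by
    rw [geom_sum_eq hx1, hx, sub_self, zero_div]
  set S := ∑ m ∈ Finset.range p, (m : ℂ) * x ^ m with hS
  have e1 : S * x = ∑ m ∈ Finset.range p, (m : ℂ) * x ^ (m + 1) := by
    rw [hS, Finset.sum_mul]
    exact Finset.sum_congr rfl fun m _ => by ring
  have e2 : ∑ m ∈ Finset.range p, ((m : ℂ) + 1) * x ^ (m + 1) = S + p := by
    have h1 := Finset.sum_range_succ' (fun k => (k : ℂ) * x ^ k) p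
    have h2 := Finset.sum_range_succ (fun k => (k : ℂ) * x ^ k) p
    simp only [Nat.cast_add, Nat.cast_one, Nat.cast_zero, zero_mul, add_zero, pow_zero] at h1 h2
    rw [h2, hx, mul_one] at h1
    rw [← h1, hS]
  have e3 : ∑ m ∈ Finset.range p, x ^ (m + 1) = 0 := by
    have : ∑ m ∈ Finset.range p, x ^ (m + 1) = x * ∑ m ∈ Finset.range p, x ^ m := by
      rw [Finset.mul_sum]; exact Finset.sum_congr rfl fun m _ => by ring
    rw [this, hgeom, mul_zero]
  have e4 : ∑ m ∈ Finset.range p, (m : ℂ) * x ^ (m + 1)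
      = (∑ m ∈ Finset.range p, ((m : ℂ) + 1) * x ^ (m + 1))
        - ∑ m ∈ Finset.range p, x ^ (m + 1) := by
    rw [← Finset.sum_sub_distrib]
    exact Finset.sum_congr rfl fun m _ => by ring
  have : S * x = S + p := by rw [e1, e4, e2, e3, sub_zero]
  linear_combination this

lemma lin_indep_nat (p : ℕ) (hp : p.Prime) (ζ : ℂ) (hprim : IsPrimitiveRoot ζ p)
    (d : ℕ → ℚ) (h : ∑ m ∈ Finset.Ico 1 p, (d m : ℂ) * ζ ^ m = 0) :
    ∀ m ∈ Finset.Ico 1 p, d m = 0 := by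
  set f : ℚ[X] := ∑ m ∈ Finset.Ico 1 p, Polynomial.C (d m) * X ^ m with hf
  have hcoeff : ∀ m ∈ Finset.Ico 1 p, f.coeff m = d m := by
    intro m hm
    rw [hf, Polynomial.finset_sum_coeff]
    simp only [Polynomial.coeff_C_mul, Polynomial.coeff_X_pow]
    rw [Finset.sum_eq_single m]
    · simp
    · intro n _ hn; simp [Ne.symm hn]
    · intro hmem; exact absurd hm hmem
  have haev : Polynomial.aeval ζ f = 0 := by
    rw [hf, map_sum]
    simpa using h
  have hdvd : minpoly ℚ ζ ∣ f := minpoly.dvd ℚ ζ haev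
  rw [← cyclotomic_eq_minpoly_rat hprim hp.pos] at hdvd
  obtain ⟨g, hg⟩ := hdvd
  have hdegf : f.natDegree ≤ p - 1 := by
    rw [hf]
    apply Polynomial.natDegree_sum_le_of_forall_le
    intro m hm
    calc (Polynomial.C (d m) * X ^ m).natDegree ≤ m := Polynomial.natDegree_C_mul_X_pow_le _ _
      _ ≤ p - 1 := by have := (Finset.mem_Ico.mp hm).2; omega
  have hcyc_deg : (Polynomial.cyclotomic p ℚ).natDegree = p - 1 := by
    rw [Polynomial.natDegree_cyclotomic, Nat.totient_prime hp]
  have hcyc_ne : Polynomial.cyclotomic p ℚ ≠ 0 := Polynomial.cyclotomic_ne_zero p ℚ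
  have hfzero : f = 0 := by
    by_contra hf0
    have hg0 : g ≠ 0 := by rintro rfl; simp [hg] at hf0
    have hdeg : f.natDegree = p - 1 + g.natDegree := by
      rw [hg, Polynomial.natDegree_mul hcyc_ne hg0, hcyc_deg]
    have hgdeg : g.natDegree = 0 := by omega
    obtain ⟨c, rfl⟩ := Polynomial.natDegree_eq_zero.mp hgdeg
    have hc : c ≠ 0 := by rintro rfl; simp at hg0
    have h0 : f.coeff 0 = 0 := by
      rw [hf, Polynomial.finset_sum_coeff]
      apply Finset.sum_eq_zero
      intro m hm
      have h1 : ¬ (0 = m) := by have := (Finset.mem_Ico.mp hm).1; omega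
      simp [Polynomial.coeff_C_mul, Polynomial.coeff_X_pow, h1]
    rw [hg, Polynomial.mul_coeff_zero, Polynomial.coeff_C_zero,
      Polynomial.cyclotomic_coeff_zero ℚ hp.one_lt, one_mul] at h0
    exact hc h0
  intro m hm
  rw [← hcoeff m hm, hfzero, Polynomial.coeff_zero]

lemma sum_units_val {M : Type*} [AddCommMonoid M] (p : ℕ) [NeZero p] (hp : p.Prime)
    (F : ℕ → M) :
    ∑ t : (ZMod p)ˣ, F ((t : ZMod p).val) = ∑ m ∈ Finset.Ico 1 p, F m := by
  haveI : Fact p.Prime := ⟨hp⟩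
  apply Finset.sum_bij (fun (t : (ZMod p)ˣ) _ => ((t : ZMod p).val))
  · intro t _
    rw [Finset.mem_Ico]
    refine ⟨Nat.pos_of_ne_zero ?_, ZMod.val_lt _⟩
    rw [Ne, ZMod.val_eq_zero]
    exact t.ne_zero
  · intro t _ s _ h
    exact Units.ext (ZMod.val_injective p h)
  · intro m hm
    rw [Finset.mem_Ico] at hm
    have hne : ((m : ZMod p)) ≠ 0 := by
      rw [Ne, ZMod.natCast_eq_zero_iff]
      exact fun hd => by have := Nat.le_of_dvd hm.1 hd; omega
    refine ⟨(isUnit_iff_ne_zero.mpr hne).unit, Finset.mem_univ _, ?_⟩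
    rw [IsUnit.unit_spec, ZMod.val_natCast, Nat.mod_eq_of_lt hm.2]
  · intro t _; rfl

end AuxLefschetz

/-- The function `j : (ℤ/pℤ)* → ℤ` sending `h` to the unique integer in `{1, …, p-1}`
congruent to `h` modulo `p`. -/
def jfun (p : ℕ) [NeZero p] (h : (ZMod p)ˣ) : ℤ := ((h : ZMod p).val : ℤ)

/-- Convolution of two `ℚ`-valued functions on `G = (ℤ/pℤ)*`:
`(f₁*f₂)(h) = (1/(p-1)) ∑_{u ∈ G} f₁(u) f₂(u⁻¹ h)`. -/
def convQ (p : ℕ) [NeZero p] (f₁ f₂ : (ZMod p)ˣ → ℚ) (h : (ZMod p)ˣ) : ℚ :=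
  (1 / ((p : ℚ) - 1)) * ∑ u : (ZMod p)ˣ, f₁ u * f₂ (u⁻¹ * h)

/-- If `a, b : G → ℤ` satisfy the identity
`1 - ∑_h a(h) ζ^{-j(h)} = ∑_u b(u)/(1 - ζ^{j(u)})` in `ℂ`, where `ζ` is a primitive
`p`-th root of unity, then `a(v) = ((p-1)/p)·(b*j)(-v) - 1` for all `v ∈ G`. -/
theorem a_eq_conv_of_lefschetz (p : ℕ) [NeZero p] (hp : p.Prime) (hodd : Odd p)
    (ζ : ℂ) (hζp : ζ ^ p = 1) (hζ1 : ζ ≠ 1)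
    (a b : (ZMod p)ˣ → ℤ)
    (H : 1 - ∑ h : (ZMod p)ˣ, (a h : ℂ) * ζ ^ (-(jfun p h)) =
        ∑ u : (ZMod p)ˣ, (b u : ℂ) / (1 - ζ ^ (jfun p u))) :
    ∀ v : (ZMod p)ˣ,
      (a v : ℚ) =
        (((p : ℚ) - 1) / p) *
            convQ p (fun u => (b u : ℚ)) (fun u => (jfun p u : ℚ)) (-v) - 1 := by
  haveI : Fact p.Prime := ⟨hp⟩
  have hp1 : 1 < p := hp.one_lt
  have horder : orderOf ζ = p := orderOf_eq_prime hζp hζ1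
  have hprim : IsPrimitiveRoot ζ p := horder ▸ IsPrimitiveRoot.orderOf ζ
  have hpow : ∀ m : ℕ, ζ ^ (m % p) = ζ ^ m := fun m => by
    rw [← horder]; exact pow_mod_orderOf ζ m
  have hvalpos : ∀ t : (ZMod p)ˣ, (t : ZMod p).val ∈ Finset.Ico 1 p := by
    intro t
    rw [Finset.mem_Ico]
    refine ⟨Nat.pos_of_ne_zero ?_, ZMod.val_lt _⟩
    rw [Ne, ZMod.val_eq_zero]
    exact t.ne_zero
  have hvalζ : ∀ t : (ZMod p)ˣ, ζ ^ (jfun p t) = ζ ^ ((t : ZMod p).val) := by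
    intro t; rw [jfun, zpow_natCast]
  have hmulζ : ∀ u w : (ZMod p)ˣ, ζ ^ ((u : ZMod p).val * (w : ZMod p).val)
      = ζ ^ (((u * w : (ZMod p)ˣ) : ZMod p).val) := by
    intro u w
    have h1 : ((u * w : (ZMod p)ˣ) : ZMod p).val
        = ((u : ZMod p).val * (w : ZMod p).val) % p := by
      rw [Units.val_mul, ZMod.val_mul]
    rw [h1, hpow]
  have hnegζ : ∀ h : (ZMod p)ˣ, ζ ^ (-(jfun p h))
      = ζ ^ (((-h : (ZMod p)ˣ) : ZMod p).val) := by
    intro h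
    have hne : (h : ZMod p) ≠ 0 := h.ne_zero
    have hv : ((-h : (ZMod p)ˣ) : ZMod p).val = p - (h : ZMod p).val := by
      rw [Units.val_neg, ZMod.neg_val]
      simp [hne]
    have hmul1 : ζ ^ (p - (h : ZMod p).val) * ζ ^ ((h : ZMod p).val) = 1 := by
      rw [← pow_add, Nat.sub_add_cancel (le_of_lt (ZMod.val_lt _)), hζp]
    calc ζ ^ (-(jfun p h)) = (ζ ^ ((h : ZMod p).val))⁻¹ := by
          rw [jfun, zpow_neg, zpow_natCast]
      _ = ζ ^ (p - (h : ZMod p).val) := inv_eq_of_mul_eq_one_left hmul1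
      _ = ζ ^ (((-h : (ZMod p)ˣ) : ZMod p).val) := by rw [hv]
  -- geometric sum facts
  have hgeom : ∑ m ∈ Finset.range p, ζ ^ m = 0 := by
    rw [geom_sum_eq hζ1, hζp, sub_self, zero_div]
  have hIco : ∑ m ∈ Finset.Ico 1 p, ζ ^ m = -1 := by
    have h3 : ∑ m ∈ Finset.Ico 0 p, ζ ^ m
        = ζ ^ 0 + ∑ m ∈ Finset.Ico 1 p, ζ ^ m :=
      Finset.sum_eq_sum_Ico_succ_bot hp.pos _
    rw [Finset.range_eq_Ico, h3, pow_zero] at hgeom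
    linear_combination hgeom
  have hsumunits : ∑ t : (ZMod p)ˣ, ζ ^ ((t : ZMod p).val) = -1 := by
    rw [sum_units_val p hp (fun m => ζ ^ m)]; exact hIco
  -- LHS transformation
  have hL2 : ∑ h : (ZMod p)ˣ, (a h : ℂ) * ζ ^ (-(jfun p h))
      = ∑ t : (ZMod p)ˣ, (a (-t) : ℂ) * ζ ^ ((t : ZMod p).val) := by
    refine Fintype.sum_equiv (Equiv.neg (ZMod p)ˣ) _ _ ?_
    intro h
    simp only [Equiv.neg_apply, neg_neg]
    rw [hnegζ h]
  have hL : 1 - ∑ h : (ZMod p)ˣ, (a h : ℂ) * ζ ^ (-(jfun p h))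
      = ∑ t : (ZMod p)ˣ, ((-1 : ℂ) - (a (-t) : ℂ)) * ζ ^ ((t : ZMod p).val) := by
    rw [hL2]
    have expand : ∑ t : (ZMod p)ˣ, ((-1 : ℂ) - (a (-t) : ℂ)) * ζ ^ ((t : ZMod p).val)
        = -(∑ t : (ZMod p)ˣ, ζ ^ ((t : ZMod p).val))
          - ∑ t : (ZMod p)ˣ, (a (-t) : ℂ) * ζ ^ ((t : ZMod p).val) := by
      rw [← Finset.sum_neg_distrib, ← Finset.sum_sub_distrib]
      exact Finset.sum_congr rfl fun t _ => by ring
    rw [expand, hsumunits]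
    ring
  -- RHS transformation
  have hζ0 : ζ ≠ 0 := by
    intro h0
    rw [h0, zero_pow hp.pos.ne'] at hζp
    exact zero_ne_one hζp
  have hpC : (p : ℂ) ≠ 0 := Nat.cast_ne_zero.mpr hp.pos.ne'
  have hR : ∑ u : (ZMod p)ˣ, (b u : ℂ) / (1 - ζ ^ (jfun p u))
      = ∑ t : (ZMod p)ˣ,
          (-(1 / (p : ℂ)) * ∑ u : (ZMod p)ˣ,
            (b u : ℂ) * (((u⁻¹ * t : (ZMod p)ˣ) : ZMod p).val : ℂ))
            * ζ ^ ((t : ZMod p).val) := by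
    have step1 : ∑ u : (ZMod p)ˣ, (b u : ℂ) / (1 - ζ ^ (jfun p u))
        = ∑ u : (ZMod p)ˣ, ∑ t : (ZMod p)ˣ,
            -(1 / (p : ℂ)) * ((b u : ℂ) * (((u⁻¹ * t : (ZMod p)ˣ) : ZMod p).val : ℂ))
              * ζ ^ ((t : ZMod p).val) := by
      refine Finset.sum_congr rfl fun u _ => ?_
      set x : ℂ := ζ ^ ((u : ZMod p).val) with hx
      have hxp : x ^ p = 1 := by
        rw [hx, ← pow_mul, mul_comm, pow_mul, hζp, one_pow]
      have hx1 : x ≠ 1 := by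
        intro h1
        have hdvd : orderOf ζ ∣ (u : ZMod p).val := orderOf_dvd_of_pow_eq_one h1
        rw [horder] at hdvd
        have hmem := hvalpos u
        rw [Finset.mem_Ico] at hmem
        have := Nat.le_of_dvd hmem.1 hdvd
        omega
      have hk := key_sum p hp.pos x hxp hx1
      have hne : (1 : ℂ) - x ≠ 0 := sub_ne_zero.mpr (Ne.symm hx1)
      have hinv : ((1 : ℂ) - x)⁻¹
          = -(1 / (p : ℂ)) * ∑ m ∈ Finset.range p, (m : ℂ) * x ^ m := by
        apply inv_eq_of_mul_eq_one_left
        have hrw : -(1 / (p : ℂ)) * (∑ m ∈ Finset.range p, (m : ℂ) * x ^ m) * (1 - x)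
            = 1 / (p : ℂ) * ((∑ m ∈ Finset.range p, (m : ℂ) * x ^ m) * (x - 1)) := by
          ring
        rw [hrw, hk]
        field_simp
      have e0 : (b u : ℂ) / (1 - ζ ^ (jfun p u))
          = (b u : ℂ) * (-(1 / (p : ℂ)) * ∑ m ∈ Finset.range p, (m : ℂ) * x ^ m) := by
        rw [hvalζ u, ← hx, div_eq_mul_inv, hinv]
      have e1 : ∑ m ∈ Finset.range p, (m : ℂ) * x ^ m
          = ∑ w : (ZMod p)ˣ, ((w : ZMod p).val : ℂ)
              * ζ ^ (((u * w : (ZMod p)ˣ) : ZMod p).val) := by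
        have r1 : ∑ m ∈ Finset.range p, (m : ℂ) * x ^ m
            = ∑ m ∈ Finset.Ico 1 p, (m : ℂ) * x ^ m := by
          rw [Finset.range_eq_Ico, Finset.sum_eq_sum_Ico_succ_bot hp.pos]
          simp
        rw [r1, ← sum_units_val p hp (fun m => (m : ℂ) * x ^ m)]
        refine Finset.sum_congr rfl fun w _ => ?_
        rw [hx, ← pow_mul, hmulζ u w]
      have e2 : ∑ w : (ZMod p)ˣ, ((w : ZMod p).val : ℂ)
              * ζ ^ (((u * w : (ZMod p)ˣ) : ZMod p).val)
          = ∑ t : (ZMod p)ˣ, (((u⁻¹ * t : (ZMod p)ˣ) : ZMod p).val : ℂ)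
              * ζ ^ ((t : ZMod p).val) := by
        refine Fintype.sum_equiv (Equiv.mulLeft u) _ _ ?_
        intro w
        simp [inv_mul_cancel_left]
      rw [e0, e1, e2, Finset.mul_sum, Finset.mul_sum]
      exact Finset.sum_congr rfl fun t _ => by ring
    rw [step1, Finset.sum_comm]
    refine Finset.sum_congr rfl fun t _ => ?_
    rw [Finset.mul_sum, Finset.sum_mul]
  -- put together, coefficients
  set q : (ZMod p)ˣ → ℚ := fun t =>
    ((-1 : ℚ) - (a (-t) : ℚ)) + (1 / (p : ℚ)) * ∑ u : (ZMod p)ˣ,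
      (b u : ℚ) * ((jfun p (u⁻¹ * t) : ℚ)) with hqdef
  have hqcast : ∀ t : (ZMod p)ˣ, ((q t : ℚ) : ℂ)
      = ((-1 : ℂ) - (a (-t) : ℂ)) + (1 / (p : ℂ)) * ∑ u : (ZMod p)ˣ,
          (b u : ℂ) * (((u⁻¹ * t : (ZMod p)ˣ) : ZMod p).val : ℂ) := by
    intro t
    rw [hqdef]
    push_cast [jfun]
    ring
  have hzero : ∑ t : (ZMod p)ˣ, ((q t : ℚ) : ℂ) * ζ ^ ((t : ZMod p).val) = 0 := by
    have := H
    rw [hL, hR] at this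
    calc ∑ t : (ZMod p)ˣ, ((q t : ℚ) : ℂ) * ζ ^ ((t : ZMod p).val)
        = ∑ t : (ZMod p)ˣ, (((-1 : ℂ) - (a (-t) : ℂ)) * ζ ^ ((t : ZMod p).val)
            - (-(1 / (p : ℂ)) * ∑ u : (ZMod p)ˣ,
                (b u : ℂ) * (((u⁻¹ * t : (ZMod p)ˣ) : ZMod p).val : ℂ))
                * ζ ^ ((t : ZMod p).val)) := by
          refine Finset.sum_congr rfl fun t _ => ?_
          rw [hqcast t]; ring
      _ = 0 := by rw [Finset.sum_sub_distrib, this, sub_self]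
  -- apply linear independence
  classical
  set d : ℕ → ℚ := fun m =>
    if h : IsUnit ((m : ℕ) : ZMod p) then q h.unit else 0 with hddef
  have hdval : ∀ t : (ZMod p)ˣ, d ((t : ZMod p).val) = q t := by
    intro t
    have hcast : ((((t : ZMod p).val : ℕ)) : ZMod p) = (t : ZMod p) :=
      ZMod.natCast_zmod_val _
    have hu : IsUnit ((((t : ZMod p).val : ℕ)) : ZMod p) := by
      rw [hcast]; exact t.isUnit
    rw [hddef]
    simp only [dif_pos hu]
    congr 1
    exact Units.ext (by rw [IsUnit.unit_spec, hcast])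
  have hdzero : ∀ m ∈ Finset.Ico 1 p, d m = 0 := by
    apply lin_indep_nat p hp ζ hprim
    rw [← sum_units_val p hp (fun m => ((d m : ℚ) : ℂ) * ζ ^ m)]
    rw [← hzero]
    refine Finset.sum_congr rfl fun t _ => ?_
    rw [hdval t]
  have hqzero : ∀ t : (ZMod p)ˣ, q t = 0 := by
    intro t
    rw [← hdval t]
    exact hdzero _ (hvalpos t)
  -- conclude
  intro v
  have hq := hqzero (-v)
  rw [hqdef] at hq
  simp only [neg_neg] at hq
  simp only [convQ]
  have hpQ : (p : ℚ) ≠ 0 := Nat.cast_ne_zero.mpr hp.pos.ne'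
  have hpQ1 : (p : ℚ) - 1 ≠ 0 := by
    have h2 : (2 : ℚ) ≤ (p : ℚ) := by exact_mod_cast hp.two_le
    intro h; rw [sub_eq_zero] at h; rw [h] at h2; norm_num at h2
  set S : ℚ := ∑ u : (ZMod p)ˣ, (b u : ℚ) * ((jfun p (u⁻¹ * -v) : ℚ)) with hS
  have hkey : ((p : ℚ) - 1) / p * (1 / ((p : ℚ) - 1) * S) = 1 / p * S := by
    field_simp
  rw [hkey]
  linarith [hq]
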